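/- Let M ∈ ℝ^{n×n} have all entries nonnegative. Then M is Schur stable (every eigenvalue over ℂ has modulus strictly less than 1) if and only if there exists a vector p ∈ ℝ^n with all entries strictly positive such that Mp < p entrywise. -/

import Mathlib

open Matrix Filter Topology

noncomputable section

/-- Entrywise positive part: `M⁺ = max(M, 0)`. -/
def matPos {m k : Type*} (M : Matrix m k ℝ) : Matrix m k ℝ :=
  Matrix.of fun i j => max (M i j) 0

/-- Entrywise negative part: `M⁻ = M⁺ − M`. -/
def matNeg {m k : Type*} (M : Matrix m k ℝ) : Matrix m k ℝ :=
  matPos M - M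

/-- Diagonal part of a square matrix. -/
def diagPart {m : Type*} [DecidableEq m] (A : Matrix m m ℝ) : Matrix m m ℝ :=
  Matrix.of fun i j => if i = j then A i j else 0

/-- A real square matrix is Hurwitz if every root of its characteristic polynomial
over `ℂ` has strictly negative real part. -/
def IsHurwitz {m : Type*} [Fintype m] [DecidableEq m] (A : Matrix m m ℝ) : Prop :=
  ∀ μ : ℂ, ((A.map Complex.ofReal).charpoly).IsRoot μ → μ.re < 0

/-- A real square matrix is Schur stable if every root of its characteristic polynomial
over `ℂ` has modulus strictly less than one. -/
def IsSchur {m : Type*} [Fintype m] [DecidableEq m] (A : Matrix m m ℝ) : Prop :=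
  ∀ μ : ℂ, ((A.map Complex.ofReal).charpoly).IsRoot μ → ‖μ‖ < 1

open Polynomial in
lemma charpoly_eval_aux {n : ℕ} (A : Matrix (Fin n) (Fin n) ℂ) (μ : ℂ) :
    A.charpoly.eval μ = (Matrix.diagonal (fun _ => μ) - A).det := by
  rw [Matrix.charpoly, ← Polynomial.coe_evalRingHom, RingHom.map_det]
  congr 1
  ext i j
  by_cases h : i = j <;>
    simp [Matrix.charmatrix_apply, Matrix.diagonal, h, Matrix.sub_apply]

open Polynomial in
lemma charpoly_isRoot_iff_aux {n : ℕ} (A : Matrix (Fin n) (Fin n) ℂ) (μ : ℂ) :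
    A.charpoly.IsRoot μ ↔ ∃ v, v ≠ 0 ∧ A *ᵥ v = μ • v := by
  have h1 := charpoly_eval_aux A μ
  constructor
  · intro hr
    have hdet : (Matrix.diagonal (fun _ => μ) - A).det = 0 := by
      rw [← h1]; exact hr
    obtain ⟨v, hv0, hv⟩ := Matrix.exists_mulVec_eq_zero_iff.mpr hdet
    refine ⟨v, hv0, ?_⟩
    have := hv
    rw [Matrix.sub_mulVec] at this
    have hd : (Matrix.diagonal (fun _ => μ)) *ᵥ v = μ • v := by
      ext i; simp [Matrix.mulVec_diagonal]
    rw [hd] at this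
    linear_combination (norm := module) -this
  · rintro ⟨v, hv0, hv⟩
    have hdet : (Matrix.diagonal (fun _ => μ) - A).det = 0 := by
      rw [← Matrix.exists_mulVec_eq_zero_iff]
      refine ⟨v, hv0, ?_⟩
      rw [Matrix.sub_mulVec, hv]
      ext i; simp [Matrix.mulVec_diagonal]
    rw [Polynomial.IsRoot, h1, hdet]

lemma spectrum_iff_aux {n : ℕ} (A : Matrix (Fin n) (Fin n) ℂ) (μ : ℂ) :
    μ ∈ spectrum ℂ A ↔ A.charpoly.IsRoot μ := by
  rw [spectrum.mem_iff, Polynomial.IsRoot, charpoly_eval_aux,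
    Matrix.isUnit_iff_isUnit_det, isUnit_iff_ne_zero, not_ne_iff]
  congr! 2

attribute [local instance] Matrix.linftyOpNormedAddCommGroup Matrix.linftyOpNormedRing
  Matrix.linftyOpNormedAlgebra

lemma row_sum_le_norm {n : ℕ} (N : Matrix (Fin n) (Fin n) ℂ) (i : Fin n) :
    (∑ j, ‖N i j‖) ≤ ‖N‖ := by
  rw [Matrix.linfty_opNorm_def]
  have h := Finset.le_sup (f := fun i => ∑ j, ‖N i j‖₊) (Finset.mem_univ i)
  calc ∑ j, ‖N i j‖ = ((∑ j, ‖N i j‖₊ : NNReal) : ℝ) := by push_cast; rfl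
    _ ≤ _ := NNReal.coe_le_coe.mpr h

lemma fwd_aux {n : ℕ} (M : Matrix (Fin n) (Fin n) ℝ)
    (hNonneg : ∀ i j : Fin n, 0 ≤ M i j)
    (hS : ∀ μ : ℂ, ((M.map Complex.ofReal).charpoly).IsRoot μ → ‖μ‖ < 1) :
    ∃ p : Fin n → ℝ, (∀ i, 0 < p i) ∧ ∀ i, (M *ᵥ p) i < p i := by
  rcases Nat.eq_zero_or_pos n with hn | hn
  · subst hn
    exact ⟨fun _ => 1, fun i => i.elim0, fun i => i.elim0⟩
  haveI : Nonempty (Fin n) := ⟨⟨0, hn⟩⟩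
  set A : Matrix (Fin n) (Fin n) ℂ := M.map Complex.ofReal with hA
  -- spectral radius < 1
  have hρ : spectralRadius ℂ A < 1 := by
    have h1 := spectrum.spectralRadius_lt_of_forall_lt_of_nonempty (𝕜 := ℂ)
      (spectrum.nonempty A) (r := 1) (fun k hk => by
        rw [← NNReal.coe_lt_coe, coe_nnnorm]
        exact hS k ((spectrum_iff_aux A k).mp hk))
    simpa using h1
  have hρtop : spectralRadius ℂ A ≠ ⊤ := (hρ.trans_le le_top).ne
  set ρ : ℝ := (spectralRadius ℂ A).toReal with hρ'
  have hρ0 : 0 ≤ ρ := ENNReal.toReal_nonneg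
  have hρ1 : ρ < 1 := by
    rw [hρ', ← ENNReal.toReal_one]
    exact (ENNReal.toReal_lt_toReal hρtop ENNReal.one_ne_top).mpr hρ
  set r : ℝ := (ρ + 1) / 2 with hr
  have hr0 : 0 < r := by positivity
  have hr1 : r < 1 := by rw [hr]; linarith
  have hρr : spectralRadius ℂ A < ENNReal.ofReal r := by
    rw [← ENNReal.ofReal_toReal hρtop]
    exact (ENNReal.ofReal_lt_ofReal_iff hr0).mpr (by rw [hr]; linarith)
  -- eventual bound on norms of powers
  have hG := (spectrum.pow_norm_pow_one_div_tendsto_nhds_spectralRadius A).eventually_lt_const hρr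
  obtain ⟨N0, hN0⟩ := eventually_atTop.mp hG
  have hbound : ∀ k ≥ N0 + 1, ‖A ^ k‖ ≤ r ^ k := by
    intro k hk
    have hk0 : (k : ℝ) ≠ 0 := Nat.cast_ne_zero.mpr (by omega)
    have h1 := hN0 k (by omega)
    have h2 : ‖A ^ k‖ ^ (1 / k : ℝ) < r := by
      rw [← ENNReal.ofReal_lt_ofReal_iff hr0] at *
      exact h1
    have h3 : ‖A ^ k‖ = (‖A ^ k‖ ^ (1 / k : ℝ)) ^ (k : ℕ) := by
      rw [← Real.rpow_natCast (‖A ^ k‖ ^ (1 / k : ℝ)) k, ← Real.rpow_mul (norm_nonneg _),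
        one_div_mul_cancel hk0, Real.rpow_one]
    rw [h3]
    exact pow_le_pow_left₀ (Real.rpow_nonneg (norm_nonneg _) _) h2.le k
  -- entries of powers
  have hpowmap : ∀ k : ℕ, A ^ k = (M ^ k).map Complex.ofReal := by
    intro k
    induction k with
    | zero => simp [Matrix.map_one]
    | succ k ih =>
      rw [pow_succ, pow_succ, ih, hA]
      exact (Matrix.map_mul (f := Complex.ofRealHom)).symm
  have hpownn : ∀ (k : ℕ) (i j : Fin n), 0 ≤ (M ^ k) i j := by
    intro k
    induction k with
    | zero => intro i j; by_cases h : i = j <;> simp [Matrix.one_apply, h]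
    | succ k ih =>
      intro i j
      rw [pow_succ, Matrix.mul_apply]
      exact Finset.sum_nonneg fun l _ => mul_nonneg (ih i l) (hNonneg l j)
  set f : ℕ → Fin n → ℝ := fun k i => ∑ j, (M ^ k) i j with hf
  have hfnn : ∀ k i, 0 ≤ f k i := fun k i => Finset.sum_nonneg fun j _ => hpownn k i j
  have hfle : ∀ k i, f k i ≤ ‖A ^ k‖ := by
    intro k i
    calc f k i = ∑ j, ‖(A ^ k) i j‖ := by
          refine Finset.sum_congr rfl fun j _ => ?_
          rw [hpowmap k, Matrix.map_apply, Complex.norm_real, Real.norm_eq_abs,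
            abs_of_nonneg (hpownn k i j)]
      _ ≤ ‖A ^ k‖ := row_sum_le_norm _ i
  -- summability
  have hsum : ∀ i, Summable fun k => f k i := by
    intro i
    rw [← summable_nat_add_iff (N0 + 1)]
    refine Summable.of_nonneg_of_le (fun k => hfnn _ i) (fun k => ?_)
      ((summable_nat_add_iff (N0 + 1)).mpr (summable_geometric_of_lt_one hr0.le hr1))
    exact (hfle _ i).trans (hbound _ (by omega))
  set p : Fin n → ℝ := fun i => ∑' k, f k i with hp
  have hf0 : ∀ i, f 0 i = 1 := by
    intro i
    simp [hf, Matrix.one_apply]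
  have hppos : ∀ i, 0 < p i := by
    intro i
    have := Summable.le_tsum (hsum i) 0 (fun k _ => hfnn k i)
    rw [hf0 i] at this
    linarith
  refine ⟨p, hppos, fun i => ?_⟩
  have hrec : ∀ k i, ∑ j, M i j * f k j = f (k + 1) i := by
    intro k i
    rw [hf]
    simp only [pow_succ']
    simp_rw [Matrix.mul_apply, Finset.mul_sum]
    rw [Finset.sum_comm]
  have hMp : (M *ᵥ p) i = ∑' k, f (k + 1) i := by
    rw [Matrix.mulVec, dotProduct]
    calc ∑ j, M i j * p j = ∑ j, ∑' k, M i j * f k j := by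
          refine Finset.sum_congr rfl fun j _ => ?_
          rw [hp, tsum_mul_left]
      _ = ∑' k, ∑ j, M i j * f k j := (Summable.tsum_finsetSum (fun j _ => (hsum j).mul_left _)).symm
      _ = ∑' k, f (k + 1) i := by
          refine tsum_congr fun k => hrec k i
  have hsplit : p i = 1 + ∑' k, f (k + 1) i := by
    rw [show p i = ∑' k, f k i from rfl, Summable.tsum_eq_zero_add (hsum i), hf0]
  rw [hMp, hsplit]
  linarith

lemma bwd_aux {n : ℕ} (M : Matrix (Fin n) (Fin n) ℝ)
    (hNonneg : ∀ i j : Fin n, 0 ≤ M i j) (p : Fin n → ℝ)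
    (hp : ∀ i, 0 < p i) (hMp : ∀ i, (M *ᵥ p) i < p i)
    (μ : ℂ) (hμ : ((M.map Complex.ofReal).charpoly).IsRoot μ) : ‖μ‖ < 1 := by
  obtain ⟨v, hv0, hv⟩ := (charpoly_isRoot_iff_aux _ μ).mp hμ
  set x : Fin n → ℝ := fun i => ‖v i‖ with hx
  obtain ⟨j0, hj0⟩ : ∃ j, v j ≠ 0 := Function.ne_iff.mp hv0
  obtain ⟨i0, -, hi0⟩ := Finset.exists_max_image Finset.univ (fun i => x i / p i)
    ⟨j0, Finset.mem_univ _⟩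
  set c := x i0 / p i0 with hcdef
  have hc : 0 < c :=
    lt_of_lt_of_le (div_pos (norm_pos_iff.mpr hj0) (hp j0)) (hi0 j0 (Finset.mem_univ _))
  have hxle : ∀ j, x j ≤ c * p j := fun j => by
    have h := hi0 j (Finset.mem_univ j)
    calc x j = (x j / p j) * p j := by rw [div_mul_cancel₀ _ (hp j).ne']
    _ ≤ c * p j := mul_le_mul_of_nonneg_right h (hp j).le
  have hxi0 : x i0 = c * p i0 := by
    rw [hcdef, div_mul_cancel₀ _ (hp i0).ne']
  have h1 : ‖μ‖ * x i0 = ‖((M.map Complex.ofReal) *ᵥ v) i0‖ := by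
    rw [hv]; simp [hx]
  have h2 : ‖((M.map Complex.ofReal) *ᵥ v) i0‖ ≤ ∑ j, M i0 j * x j := by
    rw [Matrix.mulVec, dotProduct]
    refine (norm_sum_le _ _).trans (le_of_eq (Finset.sum_congr rfl fun j _ => ?_))
    simp [Matrix.map_apply, abs_of_nonneg (hNonneg i0 j), hx]
  have h3 : ∑ j, M i0 j * x j ≤ c * (M *ᵥ p) i0 := by
    rw [Matrix.mulVec, dotProduct, Finset.mul_sum]
    refine Finset.sum_le_sum fun j _ => ?_
    calc M i0 j * x j ≤ M i0 j * (c * p j) :=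
          mul_le_mul_of_nonneg_left (hxle j) (hNonneg i0 j)
      _ = c * (M i0 j * p j) := by ring
  have hkey : ‖μ‖ * (c * p i0) < c * p i0 := by
    rw [← hxi0, h1]
    exact lt_of_le_of_lt (h2.trans h3)
      (by rw [hxi0] at *; exact (mul_lt_mul_iff_right₀ hc).mpr (hMp i0))
  have hpos : 0 < c * p i0 := mul_pos hc (hp i0)
  exact (mul_lt_iff_lt_one_left hpos).mp hkey

/-- An entrywise nonnegative matrix `M` is Schur stable iff there is an entrywise positive
vector `p` with `M p < p` entrywise. -/
theorem nonneg_schur_iff_lp {n : ℕ} (M : Matrix (Fin n) (Fin n) ℝ)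
    (hNonneg : ∀ i j : Fin n, 0 ≤ M i j) :
    IsSchur M ↔ ∃ p : Fin n → ℝ, (∀ i, 0 < p i) ∧ ∀ i, (M *ᵥ p) i < p i := by
  constructor
  · intro hS
    exact fwd_aux M hNonneg hS
  · rintro ⟨p, hp, hMp⟩ μ hμ
    exact bwd_aux M hNonneg p hp hMp μ hμ
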